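/- Under the hypotheses that r : (-∞,a) → (0,∞) is smooth with r' > 0 and r·r'' - (1+α)·r'² ≥ 0 for α > 0, if z₁, z₂ solve the ODE dz/dt = -n·r'(z)/r(z) with z₂(0) < z₁(0), then for all t > 0 in their common interval of existence: 0 < z₁(t) - z₂(t) ≤ (z₁(0) - z₂(0)) · (r(z₂(t))/r(z₂(0)))^α. -/

import Mathlib

open Filter Set

/-- distance contraction for parallel solutions of
`z' = -n r'(z)/r(z)` under the convexity condition
`r·r'' - (1+α) r'² ≥ 0`:
`0 < z₁(t) - z₂(t) ≤ (z₁(0) - z₂(0)) (r(z₂(t))/r(z₂(0)))^α` for `t > 0`. -/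
theorem stmt_2 (n : ℕ) (hn : 1 ≤ n) (a α T : ℝ) (hα : 0 < α)
    (r : ℝ → ℝ) (hr : ContDiff ℝ (⊤ : ℕ∞) r)
    (hpos : ∀ z < a, 0 < r z) (hr' : ∀ z < a, 0 < deriv r z)
    (hconv : ∀ z < a, 0 ≤ r z * deriv (deriv r) z - (1 + α) * (deriv r z) ^ 2)
    (z₁ z₂ : ℝ → ℝ)
    (hmem₁ : ∀ t ∈ Set.Ico (0 : ℝ) T, z₁ t < a)
    (hmem₂ : ∀ t ∈ Set.Ico (0 : ℝ) T, z₂ t < a)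
    (hode₁ : ∀ t ∈ Set.Ico (0 : ℝ) T,
      HasDerivAt z₁ (-(n : ℝ) * deriv r (z₁ t) / r (z₁ t)) t)
    (hode₂ : ∀ t ∈ Set.Ico (0 : ℝ) T,
      HasDerivAt z₂ (-(n : ℝ) * deriv r (z₂ t) / r (z₂ t)) t)
    (h0 : z₂ 0 < z₁ 0) :
    ∀ t ∈ Set.Ioo (0 : ℝ) T,
      0 < z₁ t - z₂ t ∧
      z₁ t - z₂ t ≤ (z₁ 0 - z₂ 0) * (r (z₂ t) / r (z₂ 0)) ^ α := by
  -- basic smoothness facts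
  have hrd : Differentiable ℝ r := hr.differentiable (by simp)
  have hdr : ContDiff ℝ ((⊤ : ℕ∞) : WithTop ℕ∞) (deriv r) := (contDiff_infty_iff_deriv.mp (hr.of_le (by simp))).2
  have hdr_diff : Differentiable ℝ (deriv r) := hdr.differentiable (by simp)
  have hrc : Continuous r := hr.continuous
  have hdrc : Continuous (deriv r) := hdr.continuous
  have hddrc : Continuous (deriv (deriv r)) := hdr.continuous_deriv (by exact_mod_cast le_top)
  -- the velocity field and its derivative
  set v : ℝ → ℝ := fun z => -(n : ℝ) * deriv r z / r z with hv_def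
  set V : ℝ → ℝ := fun z =>
    ((-(n : ℝ) * deriv (deriv r) z) * r z - (-(n : ℝ) * deriv r z) * deriv r z) / r z ^ 2
    with hV_def
  have hvd : ∀ z < a, HasDerivAt v (V z) z := by
    intro z hz
    exact (((hdr_diff z).hasDerivAt.const_mul (-(n : ℝ))).div ((hrd z).hasDerivAt)
      (ne_of_gt (hpos z hz)))
  -- g = r'/r and its derivative G
  set g : ℝ → ℝ := fun z => deriv r z / r z with hg_def
  set G : ℝ → ℝ := fun z =>
    (deriv (deriv r) z * r z - deriv r z * deriv r z) / r z ^ 2 with hG_def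
  have hgd : ∀ z < a, HasDerivAt g (G z) z := by
    intro z hz
    exact ((hdr_diff z).hasDerivAt.div ((hrd z).hasDerivAt) (ne_of_gt (hpos z hz)))
  have hGpos : ∀ z < a, α * g z ^ 2 ≤ G z := by
    intro z hz
    have hrz : 0 < r z := hpos z hz
    have hc := hconv z hz
    have : α * g z ^ 2 = α * (deriv r z) ^ 2 / r z ^ 2 := by
      simp only [hg_def]; field_simp
    rw [this, hG_def]
    apply div_le_div_of_nonneg_right _ (by positivity) |>.trans_eq rfl
    · nlinarith
  have hgpos : ∀ z < a, 0 < g z := fun z hz => div_pos (hr' z hz) (hpos z hz)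
  have hgmono : MonotoneOn g (Iio a) := by
    apply monotoneOn_of_deriv_nonneg (convex_Iio a)
    · exact fun z hz => ((hgd z hz).continuousAt).continuousWithinAt
    · intro z hz
      rw [interior_Iio] at hz
      exact ((hgd z hz).differentiableAt).differentiableWithinAt
    · intro z hz
      rw [interior_Iio] at hz
      rw [(hgd z hz).deriv]
      have := hGpos z hz
      have := hgpos z hz
      nlinarith
  -- fix t
  intro t ht
  have hsub : Icc (0 : ℝ) t ⊆ Ico 0 T := fun s hs => ⟨hs.1, lt_of_le_of_lt hs.2 ht.2⟩
  have hc₁ : ContinuousOn z₁ (Icc 0 t) :=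
    fun s hs => ((hode₁ s (hsub hs)).continuousAt).continuousWithinAt
  have hc₂ : ContinuousOn z₂ (Icc 0 t) :=
    fun s hs => ((hode₂ s (hsub hs)).continuousAt).continuousWithinAt
  have hIcc_ne : (Icc (0 : ℝ) t).Nonempty := nonempty_Icc.mpr ht.1.le
  obtain ⟨p₁, hp₁, hmax₁⟩ := isCompact_Icc.exists_isMaxOn hIcc_ne hc₁
  obtain ⟨p₂, hp₂, hmax₂⟩ := isCompact_Icc.exists_isMaxOn hIcc_ne hc₂
  obtain ⟨q₁, hq₁, hmin₁⟩ := isCompact_Icc.exists_isMinOn hIcc_ne hc₁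
  obtain ⟨q₂, hq₂, hmin₂⟩ := isCompact_Icc.exists_isMinOn hIcc_ne hc₂
  set b : ℝ := max (z₁ p₁) (z₂ p₂) with hb_def
  set m : ℝ := min (z₁ q₁) (z₂ q₂) with hm_def
  have hba : b < a := max_lt (hmem₁ _ (hsub hp₁)) (hmem₂ _ (hsub hp₂))
  have hz₁mem : ∀ s ∈ Icc (0 : ℝ) t, z₁ s ∈ Icc m b := fun s hs =>
    ⟨le_trans (min_le_left _ _) (hmin₁ hs), le_trans (hmax₁ hs) (le_max_left _ _)⟩
  have hz₂mem : ∀ s ∈ Icc (0 : ℝ) t, z₂ s ∈ Icc m b := fun s hs =>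
    ⟨le_trans (min_le_right _ _) (hmin₂ hs), le_trans (hmax₂ hs) (le_max_right _ _)⟩
  -- Lipschitz constant for v on Icc m b
  have hVcont : ContinuousOn (fun z => |V z|) (Icc m b) := by
    apply ContinuousOn.abs
    apply ContinuousOn.div
    · exact ((((continuous_const.mul hddrc)).mul hrc).sub (((continuous_const.mul hdrc)).mul hdrc)).continuousOn
    · exact (hrc.pow 2).continuousOn
    · exact fun z hz => pow_ne_zero _ (ne_of_gt (hpos z (lt_of_le_of_lt hz.2 hba)))
  have hmb_ne : (Icc m b).Nonempty := by
    refine nonempty_Icc.mpr ?_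
    have h1 := hz₁mem 0 ⟨le_refl _, ht.1.le⟩
    exact le_trans h1.1 h1.2
  obtain ⟨zC, hzC, hC⟩ := isCompact_Icc.exists_isMaxOn hmb_ne hVcont
  set C : ℝ := |V zC| with hC_def
  have hlip : LipschitzOnWith C.toNNReal v (Icc m b) := by
    apply (convex_Icc m b).lipschitzOnWith_of_nnnorm_hasDerivWithin_le
      (f' := V) (fun z hz => (hvd z (lt_of_le_of_lt hz.2 hba)).hasDerivWithinAt)
    intro z hz
    rw [← NNReal.coe_le_coe, coe_nnnorm, Real.coe_toNNReal _ (abs_nonneg _),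
      Real.norm_eq_abs]
    exact hC hz
  -- positivity on all of Icc 0 t
  have key : ∀ s ∈ Icc (0 : ℝ) t, z₂ s < z₁ s := by
    by_contra hcon
    push_neg at hcon
    obtain ⟨s, hs, hle⟩ := hcon
    have hw0 : 0 < z₁ 0 - z₂ 0 := sub_pos.mpr h0
    have hws : z₁ s - z₂ s ≤ 0 := sub_nonpos.mpr hle
    have hIcc_s : Icc (0 : ℝ) s ⊆ Icc 0 t := Icc_subset_Icc_right hs.2
    have hwc : ContinuousOn (fun τ => z₁ τ - z₂ τ) (Icc 0 s) :=
      ((hc₁.mono hIcc_s).sub (hc₂.mono hIcc_s))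
    have hmem0 : (0 : ℝ) ∈ Icc ((fun τ => z₁ τ - z₂ τ) s) ((fun τ => z₁ τ - z₂ τ) 0) :=
      ⟨hws, hw0.le⟩
    obtain ⟨s', hs', hws'⟩ := intermediate_value_Icc' hs.1 hwc hmem0
    have hws'0 : z₁ s' = z₂ s' := by
      have : z₁ s' - z₂ s' = 0 := hws'
      linarith
    have hs'pos : 0 < s' := by
      rcases lt_or_eq_of_le hs'.1 with h | h
      · exact h
      · exfalso; rw [← h] at hws'0; linarith
    have hIcc_s' : Icc (0 : ℝ) s' ⊆ Icc 0 t := Icc_subset_Icc_right (le_trans hs'.2 hs.2)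
    have heq : EqOn z₁ z₂ (Icc 0 s') := by
      apply ODE_solution_unique_of_mem_Icc_left (v := fun _ => v) (s := fun _ => Icc m b)
        (fun _ _ => hlip) (hc₁.mono hIcc_s') ?_ ?_ (hc₂.mono hIcc_s') ?_ ?_ hws'0
      · intro τ hτ
        exact (hode₁ τ (hsub (hIcc_s' (Ioc_subset_Icc_self hτ)))).hasDerivWithinAt
      · intro τ hτ
        exact hz₁mem τ (hIcc_s' (Ioc_subset_Icc_self hτ))
      · intro τ hτ
        exact (hode₂ τ (hsub (hIcc_s' (Ioc_subset_Icc_self hτ)))).hasDerivWithinAt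
      · intro τ hτ
        exact hz₂mem τ (hIcc_s' (Ioc_subset_Icc_self hτ))
    have : z₁ 0 = z₂ 0 := heq ⟨le_refl _, hs'pos.le⟩
    linarith
  -- the Lyapunov function
  set φ : ℝ → ℝ := fun s => Real.log (z₁ s - z₂ s) - α * Real.log (r (z₂ s)) with hφ_def
  set Φ : ℝ → ℝ := fun s =>
    (-(n : ℝ) * deriv r (z₁ s) / r (z₁ s) - -(n : ℝ) * deriv r (z₂ s) / r (z₂ s)) /
        (z₁ s - z₂ s) -
      α * (deriv r (z₂ s) * (-(n : ℝ) * deriv r (z₂ s) / r (z₂ s)) / r (z₂ s)) with hΦ_def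
  have hφd : ∀ s ∈ Icc (0 : ℝ) t, HasDerivAt φ (Φ s) s := by
    intro s hs
    have hws : 0 < z₁ s - z₂ s := sub_pos.mpr (key s hs)
    have hrs : 0 < r (z₂ s) := hpos _ (hmem₂ s (hsub hs))
    have h1 : HasDerivAt (fun τ => z₁ τ - z₂ τ)
        (-(n : ℝ) * deriv r (z₁ s) / r (z₁ s) - -(n : ℝ) * deriv r (z₂ s) / r (z₂ s)) s :=
      (hode₁ s (hsub hs)).sub (hode₂ s (hsub hs))
    have hlog1 := h1.log (ne_of_gt hws)
    have h2 : HasDerivAt (fun τ => r (z₂ τ))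
        (deriv r (z₂ s) * (-(n : ℝ) * deriv r (z₂ s) / r (z₂ s))) s :=
      (hrd (z₂ s)).hasDerivAt.comp s (hode₂ s (hsub hs))
    have hlog2 := h2.log (ne_of_gt hrs)
    exact hlog1.sub (hlog2.const_mul α)
  have hΦle : ∀ s ∈ Icc (0 : ℝ) t, Φ s ≤ 0 := by
    intro s hs
    set A := z₂ s with hA_def
    set B := z₁ s with hB_def
    have hAB : A < B := key s hs
    have hBa : B < a := hmem₁ s (hsub hs)
    have hAa : A < a := hmem₂ s (hsub hs)
    have hrA : 0 < r A := hpos A hAa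
    have hrB : 0 < r B := hpos B hBa
    have hBA : 0 < B - A := sub_pos.mpr hAB
    -- MVT for g on [A, B]
    have hgc : ContinuousOn g (Icc A B) := fun z hz =>
      ((hgd z (lt_of_le_of_lt hz.2 hBa)).continuousAt).continuousWithinAt
    have hgd' : ∀ z ∈ Ioo A B, HasDerivAt g (G z) z := fun z hz =>
      hgd z (lt_trans hz.2 hBa)
    obtain ⟨ξ, hξ, hslope⟩ := exists_hasDerivAt_eq_slope g G hAB hgc hgd'
    have hξa : ξ < a := lt_trans hξ.2 hBa
    have hgsub : g B - g A = G ξ * (B - A) := (div_eq_iff (ne_of_gt hBA)).mp hslope.symm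
    have hgA : 0 < g A := hgpos A hAa
    have hgAξ : g A ≤ g ξ := hgmono (mem_Iio.mpr hAa) (mem_Iio.mpr hξa) hξ.1.le
    have hGξ : α * g A ^ 2 ≤ G ξ := by
      calc α * g A ^ 2 ≤ α * g ξ ^ 2 := by
            have : g A ^ 2 ≤ g ξ ^ 2 := pow_le_pow_left₀ hgA.le hgAξ 2
            nlinarith
        _ ≤ G ξ := hGpos ξ hξa
    have hchain : α * g A ^ 2 * (B - A) ≤ g B - g A := by
      rw [hgsub]
      exact mul_le_mul_of_nonneg_right hGξ hBA.le
    -- now translate into the Φ expression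
    have hgA_eq : g A = deriv r A / r A := rfl
    have hgB_eq : g B = deriv r B / r B := rfl
    have hn0 : (0 : ℝ) < n := by exact_mod_cast hn
    show (-(n : ℝ) * deriv r B / r B - -(n : ℝ) * deriv r A / r A) / (B - A) -
        α * (deriv r A * (-(n : ℝ) * deriv r A / r A) / r A) ≤ 0
    have e1 : (-(n : ℝ) * deriv r B / r B - -(n : ℝ) * deriv r A / r A) / (B - A) -
        α * (deriv r A * (-(n : ℝ) * deriv r A / r A) / r A) =
        (-(n : ℝ) * (g B - g A)) / (B - A) + α * (n : ℝ) * (g A) ^ 2 := by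
      rw [hgA_eq, hgB_eq]; ring
    rw [e1]
    have h2 : (-(n : ℝ) * (g B - g A)) / (B - A) ≤ -(α * (n : ℝ) * g A ^ 2) := by
      rw [div_le_iff₀ hBA]
      nlinarith [mul_le_mul_of_nonneg_left hchain hn0.le]
    linarith
  -- φ is antitone
  have hφanti : AntitoneOn φ (Icc 0 t) := by
    apply antitoneOn_of_deriv_nonpos (convex_Icc 0 t)
    · exact fun s hs => ((hφd s hs).continuousAt).continuousWithinAt
    · intro s hs
      rw [interior_Icc] at hs
      exact ((hφd s (Ioo_subset_Icc_self hs)).differentiableAt).differentiableWithinAt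
    · intro s hs
      rw [interior_Icc] at hs
      rw [(hφd s (Ioo_subset_Icc_self hs)).deriv]
      exact hΦle s (Ioo_subset_Icc_self hs)
  have hφt : φ t ≤ φ 0 := hφanti ⟨le_refl _, ht.1.le⟩ ⟨ht.1.le, le_refl _⟩ ht.1.le
  -- conclude
  have htIcc : t ∈ Icc (0 : ℝ) t := ⟨ht.1.le, le_refl _⟩
  have h0Icc : (0 : ℝ) ∈ Icc (0 : ℝ) t := ⟨le_refl _, ht.1.le⟩
  have hwt : 0 < z₁ t - z₂ t := sub_pos.mpr (key t htIcc)
  have hw0 : 0 < z₁ 0 - z₂ 0 := sub_pos.mpr h0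
  have hrt : 0 < r (z₂ t) := hpos _ (hmem₂ t (hsub htIcc))
  have hr0 : 0 < r (z₂ 0) := hpos _ (hmem₂ 0 (hsub h0Icc))
  refine ⟨hwt, ?_⟩
  have hrhs : 0 < (z₁ 0 - z₂ 0) * (r (z₂ t) / r (z₂ 0)) ^ α := by positivity
  rw [← Real.log_le_log_iff hwt hrhs]
  have hlog : Real.log ((z₁ 0 - z₂ 0) * (r (z₂ t) / r (z₂ 0)) ^ α) =
      Real.log (z₁ 0 - z₂ 0) + α * (Real.log (r (z₂ t)) - Real.log (r (z₂ 0))) := by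
    rw [Real.log_mul (ne_of_gt hw0) (ne_of_gt (by positivity)),
      Real.log_rpow (by positivity), Real.log_div (ne_of_gt hrt) (ne_of_gt hr0)]
  rw [hlog]
  have := hφt
  simp only [hφ_def] at this
  linarith
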